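/- arXiv:2110.03100 — 2 statements merged into one kernel-verified Lean document; each statement's English description precedes it below -/
import Mathlib

section
/- Let n ≥ 1 and let f ∈ ℂ[x_1,…,x_n] be a polynomial such that f together with all of its partial derivatives ∂f/∂x_1, …, ∂f/∂x_n generates the unit ideal of ℂ[x_1,…,x_n] (equivalently, the hypersurface {f = 0} ⊆ 𝔸^n is smooth). Then D_n = D_n·m_f + m_f·D_n; that is, every element d of the Weyl algebra D_n can be written as d = a∘m_f + m_f∘b for some a, b ∈ D_n. (This is the paper's corollary that Ext^1(D_X, D_X) = D_{𝔸^n}/(D_{𝔸^n}·f + f·D_{𝔸^n}) vanishes for a smooth hypersurface X = {f = 0}.) -/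
open Finset

/-- Abstract surjectivity lemma: if `[T,L] = 1 - G*L`, `[G,L] = 0` and `L` is
locally nilpotent, then `L` is surjective. -/
lemma weyl_key_surj {V : Type*} [AddCommGroup V] [Module ℂ V]
    (L T G : Module.End ℂ V)
    (hGL : L * G = G * L) (hTL : T * L = L * T + 1 - G * L)
    (v : V) (m : ℕ) (hv : (L ^ m) v = 0) : ∃ u : V, L u = v := by
  set E : ℕ := 2 * m + 5 with hE
  set c : Module.End ℂ V := ∑ k ∈ Finset.range E, (G * L) ^ k with hc
  set X : Module.End ℂ V := (G * L) ^ E with hX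
  have hLG : Commute L G := hGL
  have hcomm : Commute L (G * L) := hLG.mul_right (Commute.refl L)
  have hLc : Commute L c := Commute.sum_right _ _ _ fun k _ => hcomm.pow_right k
  have hLX : Commute L X := hcomm.pow_right E
  have hgeom : c * (1 - G * L) = 1 - X := by
    have h := geom_sum_mul (G * L) E
    have h2 : c * (1 - G * L) = -(c * ((G * L) - 1)) := by noncomm_ring
    rw [h2, hc, h, hX]; noncomm_ring
  have hLT' : L * T = T * L - 1 + G * L := by rw [hTL]; noncomm_ring
  have f4 : L * (c * T) = (c * T) * L + (X - 1) := by
    have h1 : L * (c * T) = c * (L * T) := by rw [← mul_assoc, hLc.eq, mul_assoc]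
    have h3 : c * (T * L - 1 + G * L) = c * T * L - c * (1 - G * L) := by noncomm_ring
    rw [h1, hLT', h3, hgeom]; noncomm_ring
  -- applying f4 to a vector
  have f4app : ∀ w : V, L ((c * T) w) = (c * T) (L w) + (X w - w) := by
    intro w
    have := LinearMap.ext_iff.mp f4 w
    simpa [Module.End.mul_apply, LinearMap.add_apply, LinearMap.sub_apply,
      Module.End.one_apply] using this
  have hR : ∀ p : ℕ, ∀ w : V, (L ^ p) w = 0 → (L ^ (p + 1)) ((c * T) w) = 0 := by
    intro p
    induction p with
    | zero =>
      intro w hw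
      have : w = 0 := by simpa using hw
      simp [this]
    | succ p ih =>
      intro w hw
      have hstep : (L ^ (p + 2)) ((c * T) w) = (L ^ (p + 1)) (L ((c * T) w)) := by
        rw [pow_succ, Module.End.mul_apply]
      rw [hstep, f4app]
      have h1 : (L ^ (p + 1)) ((c * T) (L w)) = 0 := by
        apply ih
        have : (L ^ p) (L w) = (L ^ (p + 1)) w := by rw [pow_succ, Module.End.mul_apply]
        rw [this, hw]
      have h2 : (L ^ (p + 1)) (X w) = 0 := by
        have hcom : (L ^ (p + 1)) * X = X * (L ^ (p + 1)) := (hLX.pow_left (p + 1)).eq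
        have : (L ^ (p + 1)) (X w) = X ((L ^ (p + 1)) w) := by
          rw [← Module.End.mul_apply, hcom, Module.End.mul_apply]
        rw [this, hw, map_zero]
      rw [map_add, map_sub, h1, h2, hw]; simp
  have hRiter : ∀ (j p : ℕ) (w : V), (L ^ p) w = 0 →
      (L ^ (p + j)) (((c * T) ^ j) w) = 0 := by
    intro j
    induction j with
    | zero => intro p w hw; simpa using hw
    | succ j ih =>
      intro p w hw
      have h1 : (((c * T) ^ (j + 1)) w) = (c * T) (((c * T) ^ j) w) := by
        rw [pow_succ', Module.End.mul_apply]
      rw [h1, show p + (j + 1) = (p + j) + 1 by omega]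
      exact hR _ _ (ih p w hw)
  have hXkill : ∀ (q : ℕ) (w : V), q ≤ E → (L ^ q) w = 0 → X w = 0 := by
    intro q w hq hw
    have hGL' : Commute G L := hGL.symm
    have hX' : X = G ^ E * L ^ E := by rw [hX, hGL'.mul_pow]
    have hLE : (L ^ E) w = 0 := by
      have h1 : E = (E - q) + q := (Nat.sub_add_cancel hq).symm
      rw [h1, pow_add, Module.End.mul_apply, hw, map_zero]
    rw [hX', Module.End.mul_apply, hLE, map_zero]
  have hC : ∀ k : ℕ, k ≤ m + 3 → ∀ w : V, (L ^ (m + 1)) w = 0 →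
      L (((c * T) ^ (k + 1)) w)
        = ((c * T) ^ (k + 1)) (L w) - (((k : ℂ) + 1)) • (((c * T) ^ k) w) := by
    intro k
    induction k with
    | zero =>
      intro _ w hw
      have hx : X w = 0 := hXkill (m + 1) w (by omega) hw
      rw [pow_one, pow_zero, Module.End.one_apply, f4app, hx]
      push_cast
      module
    | succ k ih =>
      intro hk w hw
      have h1 : (((c * T) ^ (k + 2)) w) = (c * T) (((c * T) ^ (k + 1)) w) := by
        rw [pow_succ', Module.End.mul_apply]
      set u := ((c * T) ^ (k + 1)) w with hu
      have hXu : X u = 0 := by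
        apply hXkill ((m + 1) + (k + 1)) u (by omega)
        exact hRiter (k + 1) (m + 1) w hw
      have hLu : L u = ((c * T) ^ (k + 1)) (L w) - (((k : ℂ) + 1)) • (((c * T) ^ k) w) :=
        ih (by omega) w hw
      have h2 : (c * T) (((c * T) ^ (k + 1)) (L w)) = ((c * T) ^ (k + 2)) (L w) := by
        rw [← Module.End.mul_apply, ← pow_succ']
      have h3 : (c * T) (((c * T) ^ k) w) = ((c * T) ^ (k + 1)) w := by
        rw [← Module.End.mul_apply, ← pow_succ']
      have hcast : (((k + 1 : ℕ) : ℂ) + 1) = ((k : ℂ) + 1) + 1 := by push_cast; ring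
      rw [h1, f4app, hXu, hLu, map_sub, map_smul, h2, h3, ← hu]
      push_cast
      module
  -- telescoping
  set wfun : ℕ → V := fun j => ((j.factorial : ℂ)⁻¹) • (((c * T) ^ j) ((L ^ j) v)) with hwfun
  set u0 : V := ∑ j ∈ Finset.range m,
    (((j + 1).factorial : ℂ)⁻¹) • (((c * T) ^ (j + 1)) ((L ^ j) v)) with hu0
  have hterm : ∀ j ∈ Finset.range m,
      L ((((j + 1).factorial : ℂ)⁻¹) • (((c * T) ^ (j + 1)) ((L ^ j) v)))
        = wfun (j + 1) - wfun j := by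
    intro j hj
    have hj' : j < m := Finset.mem_range.mp hj
    have hw : (L ^ (m + 1)) ((L ^ j) v) = 0 := by
      have h1 : (L ^ (m + 1)) ((L ^ j) v) = (L ^ (j + 1)) ((L ^ m) v) := by
        rw [← Module.End.mul_apply, ← Module.End.mul_apply, ← pow_add, ← pow_add,
          show m + 1 + j = j + 1 + m by omega]
      rw [h1, hv, map_zero]
    rw [map_smul, hC j (by omega) _ hw]
    have hLL : L ((L ^ j) v) = (L ^ (j + 1)) v := by
      rw [← Module.End.mul_apply, ← pow_succ']
    rw [hLL, smul_sub, smul_smul, hwfun]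
    congr 1
    have hfact : (((j + 1).factorial : ℂ))⁻¹ * ((j : ℂ) + 1) = ((j.factorial : ℂ))⁻¹ := by
      rw [Nat.factorial_succ]
      push_cast
      have h1 : ((j : ℂ) + 1) ≠ 0 := by
        have := Nat.cast_add_one_ne_zero (R := ℂ) j
        simpa using this
      have h2 : ((j.factorial : ℂ)) ≠ 0 := by
        exact_mod_cast Nat.cast_ne_zero.mpr (Nat.factorial_ne_zero j)
      field_simp
    rw [hfact]
  have hsum : L u0 = wfun m - wfun 0 := by
    rw [hu0, map_sum, Finset.sum_congr rfl hterm, Finset.sum_range_sub]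
  have hwm : wfun m = 0 := by rw [hwfun]; simp [hv]
  have hw0 : wfun 0 = v := by rw [hwfun]; simp
  exact ⟨-u0, by rw [map_neg, hsum, hwm, hw0]; simp⟩

open MvPolynomial

noncomputable def WeylAlgebra (n : ℕ) :
    Subalgebra ℂ (Module.End ℂ (MvPolynomial (Fin n) ℂ)) :=
  Algebra.adjoin ℂ
    ((Set.range fun i : Fin n => LinearMap.mulLeft ℂ (MvPolynomial.X i)) ∪
      (Set.range fun i : Fin n => (MvPolynomial.pderiv i).toLinearMap))

namespace WeylAux

variable {n : ℕ}

lemma mulLeft_mul (p q : MvPolynomial (Fin n) ℂ) :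
    LinearMap.mulLeft ℂ p * LinearMap.mulLeft ℂ q = LinearMap.mulLeft ℂ (p * q) :=
  LinearMap.ext fun r => (mul_assoc p q r).symm

lemma mulLeft_comm' (p q : MvPolynomial (Fin n) ℂ) :
    LinearMap.mulLeft ℂ p * LinearMap.mulLeft ℂ q
      = LinearMap.mulLeft ℂ q * LinearMap.mulLeft ℂ p := by
  rw [mulLeft_mul, mulLeft_mul, mul_comm]

lemma pderiv_mulLeft (i : Fin n) (p : MvPolynomial (Fin n) ℂ) :
    (MvPolynomial.pderiv i).toLinearMap * LinearMap.mulLeft ℂ p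
      = LinearMap.mulLeft ℂ p * (MvPolynomial.pderiv i).toLinearMap
        + LinearMap.mulLeft ℂ (MvPolynomial.pderiv i p) := by
  apply LinearMap.ext
  intro q
  simp only [Module.End.mul_apply, LinearMap.add_apply, LinearMap.mulLeft_apply,
    Derivation.coeFn_coe, LinearMap.coe_mk]
  show MvPolynomial.pderiv i (p * q) = p * MvPolynomial.pderiv i q + MvPolynomial.pderiv i p * q
  rw [MvPolynomial.pderiv_mul]; ring

lemma mulLeft_mem (p : MvPolynomial (Fin n) ℂ) :
    LinearMap.mulLeft ℂ p ∈ WeylAlgebra n := by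
  have hp : p ∈ Algebra.adjoin ℂ (Set.range (MvPolynomial.X : Fin n → _)) := by
    rw [MvPolynomial.adjoin_range_X]; trivial
  refine Algebra.adjoin_induction
    (p := fun x _ => LinearMap.mulLeft ℂ x ∈ WeylAlgebra n) ?_ ?_ ?_ ?_ hp
  · rintro x ⟨i, rfl⟩
    exact Algebra.subset_adjoin (Or.inl ⟨i, rfl⟩)
  · intro r
    have h : LinearMap.mulLeft ℂ (algebraMap ℂ (MvPolynomial (Fin n) ℂ) r)
        = algebraMap ℂ (Module.End ℂ (MvPolynomial (Fin n) ℂ)) r := by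
      apply LinearMap.ext
      intro q
      rw [LinearMap.mulLeft_apply, Module.algebraMap_end_apply, Algebra.smul_def]
    rw [h]
    exact Subalgebra.algebraMap_mem _ r
  · intro x y _ _ hx hy
    have h : LinearMap.mulLeft ℂ (x + y) = LinearMap.mulLeft ℂ x + LinearMap.mulLeft ℂ y :=
      LinearMap.ext fun r => add_mul x y r
    rw [h]; exact add_mem hx hy
  · intro x y _ _ hx hy
    rw [← mulLeft_mul]; exact mul_mem hx hy

lemma pderiv_mem (i : Fin n) : (MvPolynomial.pderiv i).toLinearMap ∈ WeylAlgebra n :=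
  Algebra.subset_adjoin (Or.inr ⟨i, rfl⟩)

end WeylAux

namespace WeylAux

section Nilp

variable {A : Type*} [Ring A] [Algebra ℂ A]

/-- The inner derivation by `F`. -/
noncomputable def ad (F : A) : Module.End ℂ A :=
  LinearMap.mulLeft ℂ F - LinearMap.mulRight ℂ F

lemma ad_apply (F a : A) : ad F a = F * a - a * F := by
  simp [ad, LinearMap.sub_apply, LinearMap.mulLeft_apply, LinearMap.mulRight_apply]

lemma ad_leibniz (F a b : A) : ad F (a * b) = ad F a * b + a * ad F b := by
  simp only [ad_apply]; noncomm_ring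

lemma ad_pow_mul (F : A) : ∀ (N p q : ℕ) (a b : A), p + q ≤ N →
    ((ad F) ^ p) a = 0 → ((ad F) ^ q) b = 0 → ((ad F) ^ (p + q)) (a * b) = 0 := by
  intro N
  induction N with
  | zero =>
    intro p q a b hpq ha hb
    have hp : p = 0 := by omega
    have hq : q = 0 := by omega
    subst hp; subst hq
    simp only [pow_zero, Module.End.one_apply] at ha hb ⊢
    rw [ha, zero_mul, map_zero]
  | succ N ihN =>
    intro p q a b hpq ha hb
    match p, q with
    | 0, q =>
      simp only [pow_zero, Module.End.one_apply] at ha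
      simp [ha]
    | p + 1, 0 =>
      simp only [pow_zero, Module.End.one_apply] at hb
      simp [hb]
    | p + 1, q + 1 =>
      have hstep : ((ad F) ^ (p + 1 + (q + 1))) (a * b)
          = ((ad F) ^ (p + 1 + q)) ((ad F) (a * b)) := by
        rw [show p + 1 + (q + 1) = (p + 1 + q) + 1 by omega, pow_succ, Module.End.mul_apply]
      rw [hstep, ad_leibniz, map_add]
      have h1 : ((ad F) ^ (p + q + 1)) (ad F a * b) = 0 := by
        apply ihN (p) (q + 1) _ _ (by omega) _ hb
        have : ((ad F) ^ p) ((ad F) a) = ((ad F) ^ (p + 1)) a := by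
          rw [pow_succ, Module.End.mul_apply]
        rw [this, ha]
      have h2 : ((ad F) ^ (p + 1 + q)) (a * ad F b) = 0 := by
        apply ihN (p + 1) q _ _ (by omega) ha
        have : ((ad F) ^ q) ((ad F) b) = ((ad F) ^ (q + 1)) b := by
          rw [pow_succ, Module.End.mul_apply]
        rw [this, hb]
      rw [show p + 1 + q = p + q + 1 by omega] at h2 ⊢
      rw [h1, h2, add_zero]

end Nilp

/-- Local nilpotency of `ad (mulLeft f)` on the Weyl algebra. -/
lemma ad_nilpotent {n : ℕ} (f : MvPolynomial (Fin n) ℂ) :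
    ∀ d ∈ WeylAlgebra n, ∃ m : ℕ, ((ad (LinearMap.mulLeft ℂ f)) ^ m) d = 0 := by
  intro d hd
  have hd' : d ∈ Algebra.adjoin ℂ
      ((Set.range fun i : Fin n => LinearMap.mulLeft ℂ (MvPolynomial.X i)) ∪
        (Set.range fun i : Fin n => (MvPolynomial.pderiv i).toLinearMap)) := hd
  refine Algebra.adjoin_induction
    (p := fun x _ => ∃ m : ℕ, ((ad (LinearMap.mulLeft ℂ f)) ^ m) x = 0) ?_ ?_ ?_ ?_ hd'
  · rintro x (⟨i, rfl⟩ | ⟨i, rfl⟩)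
    · refine ⟨1, ?_⟩
      rw [pow_one, ad_apply, mulLeft_mul, mulLeft_mul, mul_comm f, sub_self]
    · refine ⟨2, ?_⟩
      have h1 : (ad (LinearMap.mulLeft ℂ f)) ((MvPolynomial.pderiv i).toLinearMap)
          = -LinearMap.mulLeft ℂ (MvPolynomial.pderiv i f) := by
        rw [ad_apply, pderiv_mulLeft]
        abel
      rw [pow_two, Module.End.mul_apply, h1, map_neg, ad_apply, mulLeft_mul, mulLeft_mul,
        mul_comm f, sub_self, neg_zero]
  · intro r
    refine ⟨1, ?_⟩
    rw [pow_one, ad_apply]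
    rw [Algebra.algebraMap_eq_smul_one]
    rw [mul_smul_comm, smul_mul_assoc, mul_one, one_mul, sub_self]
  · rintro x y _ _ ⟨p, hp⟩ ⟨q, hq⟩
    refine ⟨p + q, ?_⟩
    rw [map_add]
    have h1 : ((ad (LinearMap.mulLeft ℂ f)) ^ (p + q)) x = 0 := by
      rw [show p + q = q + p by omega, pow_add, Module.End.mul_apply, hp, map_zero]
    have h2 : ((ad (LinearMap.mulLeft ℂ f)) ^ (p + q)) y = 0 := by
      rw [pow_add, Module.End.mul_apply, hq, map_zero]
    rw [h1, h2, add_zero]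
  · rintro x y _ _ ⟨p, hp⟩ ⟨q, hq⟩
    exact ⟨p + q, ad_pow_mul _ (p + q) p q x y le_rfl hp hq⟩

end WeylAux

namespace WeylAux

variable {n : ℕ}

lemma mulLeft_sum {ι : Type*} (s : Finset ι) (p : ι → MvPolynomial (Fin n) ℂ) :
    LinearMap.mulLeft ℂ (∑ i ∈ s, p i) = ∑ i ∈ s, LinearMap.mulLeft ℂ (p i) := by
  apply LinearMap.ext
  intro q
  simp [LinearMap.mulLeft_apply, Finset.sum_mul]

lemma mulLeft_sub (p q : MvPolynomial (Fin n) ℂ) :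
    LinearMap.mulLeft ℂ (p - q) = LinearMap.mulLeft ℂ p - LinearMap.mulLeft ℂ q :=
  LinearMap.ext fun r => sub_mul p q r

lemma mulLeft_one' : LinearMap.mulLeft ℂ (1 : MvPolynomial (Fin n) ℂ) = 1 :=
  LinearMap.ext fun q => one_mul q

/-- The commutation relation `θ F = F θ + 1 - g F` at the endomorphism level. -/
lemma theta_rel (f g : MvPolynomial (Fin n) ℂ) (gi : Fin n → MvPolynomial (Fin n) ℂ)
    (hpoly : ∑ i, gi i * MvPolynomial.pderiv i f = 1 - g * f) :
    (∑ i, LinearMap.mulLeft ℂ (gi i) * (MvPolynomial.pderiv i).toLinearMap)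
        * LinearMap.mulLeft ℂ f
      = LinearMap.mulLeft ℂ f
          * (∑ i, LinearMap.mulLeft ℂ (gi i) * (MvPolynomial.pderiv i).toLinearMap)
        + 1 - LinearMap.mulLeft ℂ g * LinearMap.mulLeft ℂ f := by
  rw [Finset.sum_mul, Finset.mul_sum]
  have hterm : ∀ i : Fin n,
      (LinearMap.mulLeft ℂ (gi i) * (MvPolynomial.pderiv i).toLinearMap)
          * LinearMap.mulLeft ℂ f
        = LinearMap.mulLeft ℂ f
            * (LinearMap.mulLeft ℂ (gi i) * (MvPolynomial.pderiv i).toLinearMap)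
          + LinearMap.mulLeft ℂ (gi i * MvPolynomial.pderiv i f) := by
    intro i
    rw [mul_assoc, pderiv_mulLeft, mul_add, ← mulLeft_mul]
    rw [← mul_assoc, mulLeft_comm' (gi i) f, mul_assoc]
  rw [Finset.sum_congr rfl fun i _ => hterm i, Finset.sum_add_distrib, ← mulLeft_sum,
    hpoly, mulLeft_sub, mulLeft_one', mulLeft_mul]
  abel

end WeylAux

set_option maxHeartbeats 2000000 in
set_option synthInstance.maxHeartbeats 1000000 in
/-- If the hypersurface `{f = 0} ⊆ 𝔸^n` is smooth, i.e. `f` together with its partial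
derivatives generates the unit ideal, then `D_n = D_n·m_f + m_f·D_n`. -/
theorem smooth_hypersurface_DfD_eq_top (n : ℕ) (hn : 1 ≤ n) (f : MvPolynomial (Fin n) ℂ)
    (hsmooth : Ideal.span
      (insert f (Set.range fun i : Fin n => MvPolynomial.pderiv i f)) = ⊤) :
    ∀ d ∈ WeylAlgebra n, ∃ a ∈ WeylAlgebra n, ∃ b ∈ WeylAlgebra n,
      d = a * LinearMap.mulLeft ℂ f + LinearMap.mulLeft ℂ f * b := by
  classical
  intro d hd
  letI iRing : Ring ↥(WeylAlgebra n) := inferInstance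
  letI iACG : AddCommGroup ↥(WeylAlgebra n) := Ring.toAddCommGroup
  letI iMod : Module ℂ ↥(WeylAlgebra n) := inferInstance
  -- extract the coefficients from smoothness
  have h1 : (1 : MvPolynomial (Fin n) ℂ) ∈ Ideal.span
      (insert f (Set.range fun i : Fin n => MvPolynomial.pderiv i f)) := by
    rw [hsmooth]; trivial
  obtain ⟨g, z, hz, hgz⟩ := Submodule.mem_span_insert.mp h1
  obtain ⟨gi, hgi⟩ := (Submodule.mem_span_range_iff_exists_fun (MvPolynomial (Fin n) ℂ)).mp hz
  have hpoly : ∑ i, gi i * MvPolynomial.pderiv i f = 1 - g * f := by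
    have h2 : z = 1 - g * f := by
      rw [hgz, smul_eq_mul]; ring
    rw [← h2, ← hgi]
    simp [smul_eq_mul]
  -- Weyl algebra elements, with opaque witnesses
  obtain ⟨fW, hfWc⟩ : ∃ w : WeylAlgebra n,
      (w : Module.End ℂ (MvPolynomial (Fin n) ℂ)) = LinearMap.mulLeft ℂ f :=
    ⟨⟨_, WeylAux.mulLeft_mem f⟩, rfl⟩
  obtain ⟨gW, hgWc⟩ : ∃ w : WeylAlgebra n,
      (w : Module.End ℂ (MvPolynomial (Fin n) ℂ)) = LinearMap.mulLeft ℂ g :=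
    ⟨⟨_, WeylAux.mulLeft_mem g⟩, rfl⟩
  obtain ⟨θW, hθc⟩ : ∃ w : WeylAlgebra n,
      (w : Module.End ℂ (MvPolynomial (Fin n) ℂ))
        = ∑ i, LinearMap.mulLeft ℂ (gi i) * (MvPolynomial.pderiv i).toLinearMap := by
    refine ⟨∑ i, (⟨LinearMap.mulLeft ℂ (gi i), WeylAux.mulLeft_mem _⟩ : WeylAlgebra n)
      * ⟨(MvPolynomial.pderiv i).toLinearMap, WeylAux.pderiv_mem i⟩, ?_⟩
    rw [AddSubmonoidClass.coe_finset_sum]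
    rfl
  obtain ⟨w₀, hw₀c⟩ : ∃ w : WeylAlgebra n,
      (w : Module.End ℂ (MvPolynomial (Fin n) ℂ)) = d := ⟨⟨d, hd⟩, rfl⟩
  have I1W : θW * fW = fW * θW + 1 - gW * fW := by
    apply Subtype.ext
    push_cast
    rw [hθc, hfWc, hgWc]
    exact WeylAux.theta_rel f g gi hpoly
  have I2W : fW * gW = gW * fW := by
    apply Subtype.ext
    push_cast
    rw [hfWc, hgWc]
    exact WeylAux.mulLeft_comm' f g
  -- the quotient module
  set J : Submodule ℂ (WeylAlgebra n) := LinearMap.range (LinearMap.mulRight ℂ fW) with hJ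
  have hJmem : ∀ x : WeylAlgebra n, (∃ w : WeylAlgebra n, w * fW = x) → x ∈ J := by
    rintro x ⟨w, rfl⟩
    exact ⟨w, rfl⟩
  have hdesc : ∀ a : WeylAlgebra n, J ≤ J.comap (LinearMap.mulLeft ℂ a) := by
    rintro a x ⟨w, rfl⟩
    simp only [Submodule.mem_comap, LinearMap.mulRight_apply, LinearMap.mulLeft_apply]
    exact ⟨a * w, by rw [LinearMap.mulRight_apply, mul_assoc]⟩
  set Lq : Module.End ℂ ((↥(WeylAlgebra n)) ⧸ J) :=
    Submodule.mapQ J J (LinearMap.mulLeft ℂ fW) (hdesc fW) with hLq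
  set Tq : Module.End ℂ ((↥(WeylAlgebra n)) ⧸ J) :=
    Submodule.mapQ J J (LinearMap.mulLeft ℂ θW) (hdesc θW) with hTq
  set Gq : Module.End ℂ ((↥(WeylAlgebra n)) ⧸ J) :=
    Submodule.mapQ J J (LinearMap.mulLeft ℂ gW) (hdesc gW) with hGq
  have happL : ∀ w : WeylAlgebra n,
      Lq (Submodule.Quotient.mk w) = Submodule.Quotient.mk (fW * w) := by
    intro w
    rw [hLq, Submodule.mapQ_apply, LinearMap.mulLeft_apply]
  have happT : ∀ w : WeylAlgebra n,
      Tq (Submodule.Quotient.mk w) = Submodule.Quotient.mk (θW * w) := by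
    intro w
    rw [hTq, Submodule.mapQ_apply, LinearMap.mulLeft_apply]
  have happG : ∀ w : WeylAlgebra n,
      Gq (Submodule.Quotient.mk w) = Submodule.Quotient.mk (gW * w) := by
    intro w
    rw [hGq, Submodule.mapQ_apply, LinearMap.mulLeft_apply]
  have hGL : Lq * Gq = Gq * Lq := by
    apply LinearMap.ext
    intro x
    obtain ⟨w, rfl⟩ := Submodule.Quotient.mk_surjective J x
    rw [Module.End.mul_apply, Module.End.mul_apply, happG, happL, happL, happG,
      ← mul_assoc, ← mul_assoc, I2W]
  have hTL : Tq * Lq = Lq * Tq + 1 - Gq * Lq := by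
    apply LinearMap.ext
    intro x
    obtain ⟨w, rfl⟩ := Submodule.Quotient.mk_surjective J x
    rw [LinearMap.sub_apply, LinearMap.add_apply, Module.End.mul_apply, Module.End.mul_apply,
      Module.End.mul_apply, Module.End.one_apply]
    simp only [happL, happT, happG]
    have hw : θW * (fW * w) = fW * (θW * w) + w - gW * (fW * w) := by
      have h6 := congrArg (fun u : WeylAlgebra n => u * w) I1W
      simp only [add_mul, sub_mul, one_mul, mul_assoc] at h6
      exact h6
    rw [hw, Submodule.Quotient.mk_sub, Submodule.Quotient.mk_add]
  -- local nilpotency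
  obtain ⟨m, hm⟩ := WeylAux.ad_nilpotent f d hd
  set adW : Module.End ℂ (WeylAlgebra n) := WeylAux.ad fW with hadW
  have hcoe : ∀ (k : ℕ) (u : WeylAlgebra n),
      (((adW ^ k) u : WeylAlgebra n) : Module.End ℂ (MvPolynomial (Fin n) ℂ))
        = ((WeylAux.ad (LinearMap.mulLeft ℂ f) ^ k)
            (u : Module.End ℂ (MvPolynomial (Fin n) ℂ))) := by
    intro k
    induction k with
    | zero => intro u; simp
    | succ k ih =>
      intro u
      rw [pow_succ, Module.End.mul_apply, pow_succ, Module.End.mul_apply, ih]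
      congr 1
      rw [hadW, WeylAux.ad_apply, WeylAux.ad_apply]
      push_cast
      rw [hfWc]
  have hWnil : (adW ^ m) w₀ = 0 := by
    apply Subtype.ext
    rw [hcoe m w₀, hw₀c, hm]
    rfl
  have hJstab : ∀ (k : ℕ) (u : WeylAlgebra n),
      (adW ^ k) (u * fW) = ((adW ^ k) u) * fW := by
    intro k
    induction k with
    | zero => intro u; simp
    | succ k ih =>
      intro u
      have h4 : adW (u * fW) = (adW u) * fW := by
        rw [hadW, WeylAux.ad_apply, WeylAux.ad_apply, sub_mul, mul_assoc, mul_assoc]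
      rw [pow_succ, Module.End.mul_apply, Module.End.mul_apply, h4, ih (adW u)]
  have hQ : ∀ (k : ℕ) (u : WeylAlgebra n), fW ^ k * u - (adW ^ k) u ∈ J := by
    intro k
    induction k with
    | zero => intro u; simp
    | succ k ih =>
      intro u
      have e1 : fW ^ (k + 1) * u = fW ^ k * (fW * u) := by rw [pow_succ, mul_assoc]
      have e2 : (adW ^ (k + 1)) u = (adW ^ k) (adW u) := by
        rw [pow_succ, Module.End.mul_apply]
      have hmem2 : (adW ^ k) (fW * u) - (adW ^ k) (adW u) ∈ J := by
        rw [← map_sub]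
        have h5 : fW * u - adW u = u * fW := by
          rw [hadW, WeylAux.ad_apply]; abel
        rw [h5, hJstab]
        exact hJmem _ ⟨(adW ^ k) u, rfl⟩
      have e3 : fW ^ (k + 1) * u - (adW ^ (k + 1)) u
          = (fW ^ k * (fW * u) - (adW ^ k) (fW * u))
            + ((adW ^ k) (fW * u) - (adW ^ k) (adW u)) := by
        rw [e1, e2]; abel
      rw [e3]
      exact add_mem (ih (fW * u)) hmem2
  have hpow : ∀ (k : ℕ) (w : WeylAlgebra n),
      (Lq ^ k) (Submodule.Quotient.mk w) = Submodule.Quotient.mk (fW ^ k * w) := by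
    intro k
    induction k with
    | zero => intro w; simp
    | succ k ih =>
      intro w
      rw [pow_succ, Module.End.mul_apply, happL, ih, ← mul_assoc, ← pow_succ]
  have hnil0 : (Lq ^ m) (Submodule.Quotient.mk w₀) = 0 := by
    rw [hpow, Submodule.Quotient.mk_eq_zero]
    have h7 := hQ m w₀
    rw [hWnil, sub_zero] at h7
    exact h7
  obtain ⟨u, hu⟩ := weyl_key_surj Lq Tq Gq hGL hTL (Submodule.Quotient.mk w₀) m hnil0
  obtain ⟨b, rfl⟩ := Submodule.Quotient.mk_surjective J u
  rw [happL] at hu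
  have hdiff : fW * b - w₀ ∈ J := (Submodule.Quotient.eq J).mp hu
  obtain ⟨a0, ha0⟩ := hdiff
  rw [LinearMap.mulRight_apply] at ha0
  have h8 := congrArg (Subtype.val) ha0
  push_cast at h8
  rw [hfWc, hw₀c] at h8
  refine ⟨-((a0 : WeylAlgebra n) : Module.End ℂ (MvPolynomial (Fin n) ℂ)), neg_mem a0.2,
    ((b : WeylAlgebra n) : Module.End ℂ (MvPolynomial (Fin n) ℂ)), b.2, ?_⟩
  have h9 : (-((a0 : WeylAlgebra n) : Module.End ℂ (MvPolynomial (Fin n) ℂ)))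
      * LinearMap.mulLeft ℂ f
      = -(((a0 : WeylAlgebra n) : Module.End ℂ (MvPolynomial (Fin n) ℂ))
          * LinearMap.mulLeft ℂ f) := LinearMap.ext fun q => rfl
  rw [h9, h8]
  abel
end

section
/- Let f = xy ∈ ℂ[x,y], the defining equation of the union of the two coordinate axes (a nodal, non-cuspidal singularity). Then D_2 ≠ D_2·m_f + m_f·D_2; in particular, the identity operator cannot be written as a∘m_f + m_f∘b with a, b ∈ D_2. (This expresses that Ext^1(D_X, D_X) = D_{𝔸^2}/(D_{𝔸^2}·xy + xy·D_{𝔸^2}) is nonzero for the node.) -/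
open MvPolynomial

noncomputable section NodeAux

/-- abbreviation for the polynomial ring. -/
abbrev RR := MvPolynomial (Fin 2) ℂ

/-- the monomial `x^i y^j`. -/
def mon (i j : ℕ) : RR := X 0 ^ i * X 1 ^ j

/-- evaluation of a two-variable polynomial at a pair of complex numbers. -/
def ev (g : MvPolynomial (Fin 2) ℂ) (s t : ℂ) : ℂ :=
  MvPolynomial.eval (fun k => if k = 0 then s else t) g

lemma ev_zero (s t : ℂ) : ev 0 s t = 0 := map_zero _

lemma ev_add (g h : MvPolynomial (Fin 2) ℂ) (s t : ℂ) :
    ev (g + h) s t = ev g s t + ev h s t := map_add _ _ _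

lemma ev_mul (g h : MvPolynomial (Fin 2) ℂ) (s t : ℂ) :
    ev (g * h) s t = ev g s t * ev h s t := map_mul _ _ _

lemma ev_sum {α : Type*} (S : Finset α) (f : α → MvPolynomial (Fin 2) ℂ) (s t : ℂ) :
    ev (∑ x ∈ S, f x) s t = ∑ x ∈ S, ev (f x) s t := map_sum _ _ _

/-- band of width `N`. -/
def band (N : ℕ) : Finset (ℤ × ℤ) :=
  Finset.Icc (-(N : ℤ)) (N : ℤ) ×ˢ Finset.Icc (-(N : ℤ)) (N : ℤ)

lemma mem_band {N : ℕ} {p : ℤ × ℤ} : p ∈ band N ↔ |p.1| ≤ (N : ℤ) ∧ |p.2| ≤ (N : ℤ) := by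
  simp [band, Finset.mem_product, abs_le]

/-- `g` is a banded-matrix-with-polynomial-entries representation of the operator `a`. -/
def NRep (a : Module.End ℂ RR) (N : ℕ) (g : ℤ → ℤ → MvPolynomial (Fin 2) ℂ) : Prop :=
  (∀ u v : ℤ, ((N : ℤ) < |u| ∨ (N : ℤ) < |v|) → g u v = 0) ∧
  (∀ (u v : ℤ) (i j : ℕ), ((i : ℤ) + u < 0 ∨ (j : ℤ) + v < 0) → ev (g u v) i j = 0) ∧
  (∀ i j : ℕ, a (mon i j) =
    ∑ p ∈ band N, ev (g p.1 p.2) i j • mon ((i + p.1).toNat) ((j + p.2).toNat))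

def NGood (a : Module.End ℂ RR) : Prop := ∃ N g, NRep a N g


lemma mon_eq (i j : ℕ) : mon i j = monomial (Finsupp.single 0 i + Finsupp.single 1 j) 1 := by
  rw [mon, X_pow_eq_monomial, X_pow_eq_monomial, monomial_mul, one_mul]

lemma sing_eq_iff {i j k l : ℕ} :
    Finsupp.single (0 : Fin 2) i + Finsupp.single 1 j
      = Finsupp.single (0 : Fin 2) k + Finsupp.single 1 l ↔ i = k ∧ j = l := by
  constructor
  · intro h
    have h0 := DFunLike.congr_fun h 0
    have h1 := DFunLike.congr_fun h 1
    simp [Finsupp.single_apply] at h0 h1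
    exact ⟨h0, h1⟩
  · rintro ⟨rfl, rfl⟩; rfl

lemma coeff_mon (i j k l : ℕ) :
    coeff (Finsupp.single 0 k + Finsupp.single 1 l) (mon i j)
      = if i = k ∧ j = l then 1 else 0 := by
  rw [mon_eq, coeff_monomial]
  simp only [sing_eq_iff]

lemma ev_aeval (φ : Fin 2 → MvPolynomial (Fin 2) ℂ) (g : MvPolynomial (Fin 2) ℂ) (s t : ℂ) :
    ev (aeval φ g) s t = MvPolynomial.eval (fun k => ev (φ k) s t) g := by
  induction g using MvPolynomial.induction_on with
  | C c => simp [ev]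
  | add p q hp hq => simp only [map_add, ev_add, hp, hq]
  | mul_X p n hp => simp only [map_mul, ev_mul, hp, aeval_X, eval_mul, eval_X]

/-- substitute `(x + u, y + v)` for `(x, y)`. -/
def shiftP (h : MvPolynomial (Fin 2) ℂ) (u v : ℤ) : MvPolynomial (Fin 2) ℂ :=
  aeval (fun k : Fin 2 => if k = 0 then X 0 + C (u : ℂ) else X 1 + C (v : ℂ)) h

lemma ev_shiftP (h : MvPolynomial (Fin 2) ℂ) (u v : ℤ) (s t : ℂ) :
    ev (shiftP h u v) s t = ev h (s + u) (t + v) := by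
  rw [shiftP, ev_aeval]
  have hfun : (fun k : Fin 2 => ev (if k = 0 then X 0 + C (u : ℂ) else X 1 + C (v : ℂ)) s t)
      = fun k => if k = 0 then s + (u : ℂ) else t + (v : ℂ) := by
    funext k; by_cases hk : k = 0 <;> simp [ev, hk]
  rw [hfun]; rfl

lemma NRep.enlarge {a : Module.End ℂ RR} {N : ℕ} {g} (h : NRep a N g) {M : ℕ} (hNM : N ≤ M) :
    NRep a M g := by
  obtain ⟨h0, h1, h2⟩ := h
  refine ⟨fun u v huv => h0 u v (by omega), h1, fun i j => ?_⟩
  rw [h2]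
  apply Finset.sum_subset
  · intro p hp
    rw [mem_band] at hp ⊢
    omega
  · intro p _ hnp
    rw [mem_band] at hnp
    rw [h0 p.1 p.2 (by omega), ev_zero, zero_smul]

lemma nrep_coeff {a : Module.End ℂ RR} {N : ℕ} {g} (h : NRep a N g) (i j k l : ℕ) :
    coeff (Finsupp.single 0 k + Finsupp.single 1 l) (a (mon i j))
      = ev (g ((k : ℤ) - i) ((l : ℤ) - j)) i j := by
  obtain ⟨h0, h1, h2⟩ := h
  rw [h2, coeff_sum]
  have step : ∀ p ∈ band N,
      coeff (Finsupp.single 0 k + Finsupp.single 1 l)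
        (ev (g p.1 p.2) i j • mon ((i + p.1).toNat) ((j + p.2).toNat))
      = if p = (((k : ℤ) - i), ((l : ℤ) - j)) then ev (g ((k : ℤ) - i) ((l : ℤ) - j)) i j
        else 0 := by
    rintro ⟨u, v⟩ _
    rw [coeff_smul, coeff_mon, smul_eq_mul]
    by_cases hc : u = (k : ℤ) - i ∧ v = (l : ℤ) - j
    · obtain ⟨rfl, rfl⟩ := hc
      have e1 : ((i : ℤ) + ((k : ℤ) - i)).toNat = k := by omega
      have e2 : ((j : ℤ) + ((l : ℤ) - j)).toNat = l := by omega
      simp [e1, e2]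
    · have hpne : ((u, v) : ℤ × ℤ) ≠ ((k : ℤ) - i, (l : ℤ) - j) := by
        rw [Ne, Prod.mk.injEq]; exact hc
      rw [if_neg hpne]
      by_cases hcond : ((i : ℤ) + u).toNat = k ∧ ((j : ℤ) + v).toNat = l
      · rw [if_pos hcond, mul_one]
        refine h1 u v i j ?_
        by_contra hnn
        push_neg at hnn
        obtain ⟨e1, e2⟩ := hcond
        exact hc ⟨by omega, by omega⟩
      · rw [if_neg hcond, mul_zero]
  rw [Finset.sum_congr rfl step, Finset.sum_ite_eq']
  by_cases hmem : ((((k : ℤ) - i), ((l : ℤ) - j)) : ℤ × ℤ) ∈ band N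
  · rw [if_pos hmem]
  · rw [if_neg hmem]
    have hb : (N : ℤ) < |(k : ℤ) - i| ∨ (N : ℤ) < |(l : ℤ) - j| := by
      by_contra hcon
      push_neg at hcon
      exact hmem (mem_band.2 ⟨hcon.1, hcon.2⟩)
    rw [h0 _ _ hb, ev_zero]

lemma NRep.add {a b : Module.End ℂ RR} {N : ℕ} {g h}
    (ha : NRep a N g) (hb : NRep b N h) :
    NRep (a + b) N (fun u v => g u v + h u v) := by
  obtain ⟨ha0, ha1, ha2⟩ := ha
  obtain ⟨hb0, hb1, hb2⟩ := hb
  refine ⟨fun u v huv => ?_, fun u v i j hneg => ?_, fun i j => ?_⟩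
  · show g u v + h u v = 0
    rw [ha0 u v huv, hb0 u v huv, add_zero]
  · show ev (g u v + h u v) i j = 0
    rw [ev_add, ha1 u v i j hneg, hb1 u v i j hneg, add_zero]
  rw [LinearMap.add_apply, ha2, hb2, ← Finset.sum_add_distrib]
  exact Finset.sum_congr rfl fun p _ => by rw [ev_add, add_smul]

lemma rep_single (a : Module.End ℂ RR) (N : ℕ) (u0 v0 : ℤ) (hu : |u0| ≤ (N : ℤ))
    (hv : |v0| ≤ (N : ℤ)) (p : MvPolynomial (Fin 2) ℂ)
    (h1 : ∀ i j : ℕ, ((i : ℤ) + u0 < 0 ∨ (j : ℤ) + v0 < 0) → ev p i j = 0)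
    (h2 : ∀ i j : ℕ, a (mon i j) = ev p i j • mon ((i + u0).toNat) ((j + v0).toNat)) :
    NRep a N (fun u v => if u = u0 ∧ v = v0 then p else 0) := by
  refine ⟨?_, ?_, ?_⟩
  · intro u v huv
    show (if u = u0 ∧ v = v0 then p else 0) = 0
    split
    · next h => obtain ⟨rfl, rfl⟩ := h; omega
    · rfl
  · intro u v i j hneg
    show ev (if u = u0 ∧ v = v0 then p else 0) i j = 0
    split
    · next h => obtain ⟨rfl, rfl⟩ := h; exact h1 i j hneg
    · exact ev_zero _ _
  · intro i j
    rw [h2, Finset.sum_eq_single ((u0, v0) : ℤ × ℤ)]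
    · simp
    · rintro ⟨u, v⟩ _ hne
      have hne2 : ¬(u = u0 ∧ v = v0) := by
        rintro ⟨rfl, rfl⟩; exact hne rfl
      show ev (if u = u0 ∧ v = v0 then p else 0) i j • _ = 0
      rw [if_neg hne2, ev_zero, zero_smul]
    · intro habs
      exact absurd (mem_band.2 ⟨hu, hv⟩) habs


lemma shift_sum (Na M : ℕ) (q : ℤ × ℤ) (hq1 : |q.1| + Na ≤ M) (hq2 : |q.2| + Na ≤ M)
    (F : ℤ × ℤ → RR) (hF : ∀ r : ℤ × ℤ, r - q ∉ band Na → F r = 0) :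
    ∑ r ∈ band M, F r = ∑ p ∈ band Na, F (q + p) := by
  have h1 : ∑ p ∈ band Na, F (q + p)
      = ∑ r ∈ (band Na).map (Equiv.toEmbedding (Equiv.addLeft q)), F r := by
    rw [Finset.sum_map]
    exact Finset.sum_congr rfl fun p _ => by simp
  rw [h1]
  symm
  apply Finset.sum_subset
  · intro r hr
    simp only [Finset.mem_map, Equiv.coe_toEmbedding, Equiv.coe_addLeft] at hr
    obtain ⟨p, hp, rfl⟩ := hr
    rw [mem_band] at hp ⊢
    have t1 := abs_add_le q.1 p.1
    have t2 := abs_add_le q.2 p.2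
    rw [Prod.fst_add, Prod.snd_add]
    constructor <;> omega
  · intro r _ hnr
    apply hF
    intro hmem
    apply hnr
    simp only [Finset.mem_map, Equiv.coe_toEmbedding, Equiv.coe_addLeft]
    refine ⟨r - q, hmem, by ring⟩

lemma NRep.mul {a b : Module.End ℂ RR} {Na Nb : ℕ} {ga gb}
    (ha : NRep a Na ga) (hb : NRep b Nb gb) :
    NRep (a * b) (Na + Nb)
      (fun w z => ∑ q ∈ band Nb, gb q.1 q.2 * shiftP (ga (w - q.1) (z - q.2)) q.1 q.2) := by
  obtain ⟨ha0, ha1, ha2⟩ := ha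
  obtain ⟨hb0, hb1, hb2⟩ := hb
  have evgc : ∀ (w z : ℤ) (i j : ℕ),
      ev (∑ q ∈ band Nb, gb q.1 q.2 * shiftP (ga (w - q.1) (z - q.2)) q.1 q.2) i j
        = ∑ q ∈ band Nb, ev (gb q.1 q.2) i j
            * ev (ga (w - q.1) (z - q.2)) ((i : ℂ) + q.1) ((j : ℂ) + q.2) := by
    intro w z i j
    rw [ev_sum]
    exact Finset.sum_congr rfl fun q _ => by rw [ev_mul, ev_shiftP]
  refine ⟨?_, ?_, ?_⟩
  · intro w z hwz
    show (∑ q ∈ band Nb, gb q.1 q.2 * shiftP (ga (w - q.1) (z - q.2)) q.1 q.2) = 0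
    apply Finset.sum_eq_zero
    intro q hq
    rw [mem_band] at hq
    have hga : ga (w - q.1) (z - q.2) = 0 := by
      apply ha0
      have t1 := abs_sub_abs_le_abs_sub w q.1
      have t2 := abs_sub_abs_le_abs_sub z q.2
      rcases hwz with h | h
      · left; omega
      · right; omega
    rw [hga, shiftP, map_zero, mul_zero]
  · intro w z i j hneg
    show ev (∑ q ∈ band Nb, gb q.1 q.2 * shiftP (ga (w - q.1) (z - q.2)) q.1 q.2) i j = 0
    rw [evgc]
    apply Finset.sum_eq_zero
    intro q _
    by_cases hbneg : (i : ℤ) + q.1 < 0 ∨ (j : ℤ) + q.2 < 0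
    · rw [hb1 q.1 q.2 i j hbneg]
      exact zero_mul _
    · push_neg at hbneg
      obtain ⟨hiu, hjv⟩ := hbneg
      have e1 : ((((i : ℤ) + q.1).toNat : ℂ)) = (i : ℂ) + q.1 := by
        exact_mod_cast congrArg (fun n : ℤ => (n : ℂ)) (Int.toNat_of_nonneg hiu)
      have e2 : ((((j : ℤ) + q.2).toNat : ℂ)) = (j : ℂ) + q.2 := by
        exact_mod_cast congrArg (fun n : ℤ => (n : ℂ)) (Int.toNat_of_nonneg hjv)
      have hz : ev (ga (w - q.1) (z - q.2))
          ((((i : ℤ) + q.1).toNat : ℕ)) ((((j : ℤ) + q.2).toNat : ℕ)) = 0 := by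
        apply ha1
        rcases hneg with h | h
        · left; omega
        · right; omega
      rw [e1, e2] at hz
      rw [hz, mul_zero]
  · intro i j
    rw [Module.End.mul_apply, hb2, map_sum]
    have lhs_eq : ∀ q ∈ band Nb,
        a (ev (gb q.1 q.2) i j • mon (((i : ℤ) + q.1).toNat) (((j : ℤ) + q.2).toNat))
          = ∑ r ∈ band (Na + Nb),
              (ev (gb q.1 q.2) i j
                * ev (ga (r.1 - q.1) (r.2 - q.2)) ((i : ℂ) + q.1) ((j : ℂ) + q.2))
                • mon (((i : ℤ) + r.1).toNat) (((j : ℤ) + r.2).toNat) := by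
      intro q hq
      rw [map_smul]
      by_cases hbneg : (i : ℤ) + q.1 < 0 ∨ (j : ℤ) + q.2 < 0
      · rw [hb1 q.1 q.2 i j hbneg, zero_smul]
        symm
        apply Finset.sum_eq_zero
        intro r _
        rw [zero_mul, zero_smul]
      · push_neg at hbneg
        obtain ⟨hiu, hjv⟩ := hbneg
        set i' : ℕ := ((i : ℤ) + q.1).toNat with hi'
        set j' : ℕ := ((j : ℤ) + q.2).toNat with hj'
        have hi2 : ((i' : ℕ) : ℤ) = (i : ℤ) + q.1 := Int.toNat_of_nonneg hiu
        have hj2 : ((j' : ℕ) : ℤ) = (j : ℤ) + q.2 := Int.toNat_of_nonneg hjv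
        have hic : ((i' : ℕ) : ℂ) = (i : ℂ) + q.1 := by
          exact_mod_cast congrArg (fun n : ℤ => (n : ℂ)) hi2
        have hjc : ((j' : ℕ) : ℂ) = (j : ℂ) + q.2 := by
          exact_mod_cast congrArg (fun n : ℤ => (n : ℂ)) hj2
        have hshift := shift_sum Na (Na + Nb) q
          (by rw [mem_band] at hq; omega) (by rw [mem_band] at hq; omega)
          (fun r => (ev (gb q.1 q.2) i j
                * ev (ga (r.1 - q.1) (r.2 - q.2)) ((i : ℂ) + q.1) ((j : ℂ) + q.2))
                • mon (((i : ℤ) + r.1).toNat) (((j : ℤ) + r.2).toNat))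
          (by
            intro r hr
            rw [mem_band] at hr
            simp only [Prod.fst_sub, Prod.snd_sub] at hr
            have hga : ga (r.1 - q.1) (r.2 - q.2) = 0 := ha0 _ _ (by omega)
            simp only [hga, ev_zero, mul_zero, zero_smul])
        rw [hshift, ha2 i' j', Finset.smul_sum]
        refine Finset.sum_congr rfl fun p hp => ?_
        have ee1 : (((i' : ℕ) : ℤ) + p.1).toNat = ((i : ℤ) + (q + p).1).toNat := by
          rw [Prod.fst_add]; omega
        have ee2 : (((j' : ℕ) : ℤ) + p.2).toNat = ((j : ℤ) + (q + p).2).toNat := by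
          rw [Prod.snd_add]; omega
        rw [smul_smul, ee1, ee2, Prod.fst_add, Prod.snd_add, add_sub_cancel_left,
          add_sub_cancel_left, hic, hjc]
    rw [Finset.sum_congr rfl lhs_eq, Finset.sum_comm]
    refine Finset.sum_congr rfl fun r _ => ?_
    rw [evgc, Finset.sum_smul]

lemma good_mulX (k : Fin 2) : NGood (LinearMap.mulLeft ℂ (X k) : Module.End ℂ RR) := by
  fin_cases k
  · show NGood (LinearMap.mulLeft ℂ (X 0) : Module.End ℂ RR)
    refine ⟨1, _, rep_single _ 1 1 0 (by norm_num) (by norm_num) 1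
      (fun i j h => absurd h (by omega)) (fun i j => ?_)⟩
    have e1 : ((i : ℤ) + 1).toNat = i + 1 := by omega
    have e2 : ((j : ℤ) + 0).toNat = j := by omega
    rw [LinearMap.mulLeft_apply, e1, e2]
    have hev : ev 1 (i : ℂ) j = 1 := map_one _
    rw [hev, one_smul, mon, mon, pow_succ]
    ring
  · show NGood (LinearMap.mulLeft ℂ (X 1) : Module.End ℂ RR)
    refine ⟨1, _, rep_single _ 1 0 1 (by norm_num) (by norm_num) 1
      (fun i j h => absurd h (by omega)) (fun i j => ?_)⟩
    have e1 : ((i : ℤ) + 0).toNat = i := by omega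
    have e2 : ((j : ℤ) + 1).toNat = j + 1 := by omega
    rw [LinearMap.mulLeft_apply, e1, e2]
    have hev : ev 1 (i : ℂ) j = 1 := map_one _
    rw [hev, one_smul, mon, mon, pow_succ]
    ring

lemma good_pderiv (k : Fin 2) : NGood ((pderiv k).toLinearMap : Module.End ℂ RR) := by
  fin_cases k
  · show NGood ((pderiv 0).toLinearMap : Module.End ℂ RR)
    refine ⟨1, _, rep_single _ 1 (-1) 0 (by norm_num) (by norm_num) (X 0)
      (fun i j h => ?_) (fun i j => ?_)⟩
    · have hi : i = 0 := by omega
      subst hi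
      show ev (X 0) ((0 : ℕ) : ℂ) j = 0
      simp [ev]
    · have e2 : ((j : ℤ) + 0).toNat = j := by omega
      have hev : ev (X 0) (i : ℂ) j = (i : ℂ) := by simp [ev]
      rw [e2]
      show pderiv 0 (mon i j) = ev (X 0) (i : ℂ) j • mon ((i : ℤ) + -1).toNat j
      rw [hev, mon, mon, pderiv_mul]
      have hx1 : pderiv (0 : Fin 2) ((X 1 : RR) ^ j) = 0 := by
        rw [pderiv_pow, pderiv_X_of_ne (by decide), mul_zero]
      rw [hx1, mul_zero, add_zero, pderiv_pow, pderiv_X_self, mul_one]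
      cases i with
      | zero => simp
      | succ n =>
        have e3 : (((n + 1 : ℕ) : ℤ) + -1).toNat = n := by omega
        have e4 : (n + 1) - 1 = n := rfl
        rw [e3, e4, Nat.cast_smul_eq_nsmul, nsmul_eq_mul]
        push_cast
        ring
  · show NGood ((pderiv 1).toLinearMap : Module.End ℂ RR)
    refine ⟨1, _, rep_single _ 1 0 (-1) (by norm_num) (by norm_num) (X 1)
      (fun i j h => ?_) (fun i j => ?_)⟩
    · have hj : j = 0 := by omega
      subst hj
      show ev (X 1) (i : ℂ) ((0 : ℕ) : ℂ) = 0
      simp [ev]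
    · have e1 : ((i : ℤ) + 0).toNat = i := by omega
      have hev : ev (X 1) (i : ℂ) j = (j : ℂ) := by simp [ev]
      rw [e1]
      show pderiv 1 (mon i j) = ev (X 1) (i : ℂ) j • mon i ((j : ℤ) + -1).toNat
      rw [hev, mon, mon, pderiv_mul]
      have hx0 : pderiv (1 : Fin 2) ((X 0 : RR) ^ i) = 0 := by
        rw [pderiv_pow, pderiv_X_of_ne (by decide), mul_zero]
      rw [hx0, zero_mul, zero_add, pderiv_pow, pderiv_X_self, mul_one]
      cases j with
      | zero => simp
      | succ n =>
        have e3 : (((n + 1 : ℕ) : ℤ) + -1).toNat = n := by omega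
        have e4 : (n + 1) - 1 = n := rfl
        rw [e3, e4, Nat.cast_smul_eq_nsmul, nsmul_eq_mul]
        push_cast
        ring

lemma good_algebraMap (c : ℂ) : NGood (algebraMap ℂ (Module.End ℂ RR) c) := by
  refine ⟨0, _, rep_single _ 0 0 0 (by norm_num) (by norm_num) (C c)
    (fun i j h => absurd h (by omega)) (fun i j => ?_)⟩
  have e1 : ((i : ℤ) + 0).toNat = i := by omega
  have e2 : ((j : ℤ) + 0).toNat = j := by omega
  rw [e1, e2, Module.algebraMap_end_apply]
  congr 1
  simp [ev]

lemma NGood.add {a b : Module.End ℂ RR} (ha : NGood a) (hb : NGood b) : NGood (a + b) := by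
  obtain ⟨Na, ga, hga⟩ := ha
  obtain ⟨Nb, gb, hgb⟩ := hb
  exact ⟨max Na Nb, _,
    (hga.enlarge (le_max_left _ _)).add (hgb.enlarge (le_max_right _ _))⟩

lemma NGood.mul {a b : Module.End ℂ RR} (ha : NGood a) (hb : NGood b) : NGood (a * b) := by
  obtain ⟨Na, ga, hga⟩ := ha
  obtain ⟨Nb, gb, hgb⟩ := hb
  exact ⟨Na + Nb, _, hga.mul hgb⟩

lemma coeff_xy_mul (q : RR) (i : ℕ) :
    coeff (Finsupp.single 0 i + Finsupp.single 1 0) ((X 0 * X 1 : RR) * q) = 0 := by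
  have h : (X 0 * X 1 : RR) * q = X 1 * (X 0 * q) := by ring
  rw [h, coeff_X_mul', if_neg]
  simp [Finsupp.mem_support_iff, Finsupp.add_apply, Finsupp.single_apply]

lemma eval_aeval_poly (φ : Fin 2 → Polynomial ℂ) (h : MvPolynomial (Fin 2) ℂ) (s : ℂ) :
    Polynomial.eval s (MvPolynomial.aeval φ h)
      = MvPolynomial.eval (fun k => Polynomial.eval s (φ k)) h := by
  induction h using MvPolynomial.induction_on with
  | C c => simp
  | add p q hp hq => simp [hp, hq]
  | mul_X p n hp => simp [hp]

end NodeAux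

/-- For the node `f = xy` (union of the two coordinate axes), `D_2 ≠ D_2·m_f + m_f·D_2`;
in particular the identity operator cannot be written as `a∘m_f + m_f∘b`. -/
theorem node_DfD_ne_top :
    ¬ (∀ d ∈ WeylAlgebra 2, ∃ a ∈ WeylAlgebra 2, ∃ b ∈ WeylAlgebra 2,
        d = a * LinearMap.mulLeft ℂ (MvPolynomial.X 0 * MvPolynomial.X 1)
          + LinearMap.mulLeft ℂ (MvPolynomial.X 0 * MvPolynomial.X 1) * b) ∧
    ¬ (∃ a ∈ WeylAlgebra 2, ∃ b ∈ WeylAlgebra 2,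
        (1 : Module.End ℂ (MvPolynomial (Fin 2) ℂ))
          = a * LinearMap.mulLeft ℂ (MvPolynomial.X 0 * MvPolynomial.X 1)
          + LinearMap.mulLeft ℂ (MvPolynomial.X 0 * MvPolynomial.X 1) * b) := by
  have key : ¬ (∃ a ∈ WeylAlgebra 2, ∃ b ∈ WeylAlgebra 2,
      (1 : Module.End ℂ (MvPolynomial (Fin 2) ℂ))
        = a * LinearMap.mulLeft ℂ (MvPolynomial.X 0 * MvPolynomial.X 1)
        + LinearMap.mulLeft ℂ (MvPolynomial.X 0 * MvPolynomial.X 1) * b) := by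
    rintro ⟨a, ha, b, hb, heq⟩
    have hgood : NGood a := by
      refine Algebra.adjoin_induction ?_ ?_ ?_ ?_ ha
      · rintro x (⟨k, rfl⟩ | ⟨k, rfl⟩)
        · exact good_mulX k
        · exact good_pderiv k
      · exact good_algebraMap
      · exact fun x y _ _ hx hy => hx.add hy
      · exact fun x y _ _ hx hy => hx.mul hy
    obtain ⟨N, g, hrep⟩ := hgood
    have hone : ∀ i : ℕ, ev (g (-1) (-1)) ((i : ℂ) + 1) 1 = 1 := by
      intro i
      have h := LinearMap.congr_fun heq (mon i 0)
      rw [Module.End.one_apply, LinearMap.add_apply, Module.End.mul_apply, Module.End.mul_apply,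
        LinearMap.mulLeft_apply, LinearMap.mulLeft_apply] at h
      have hm : (X 0 * X 1 : RR) * mon i 0 = mon (i + 1) 1 := by
        rw [mon, mon]; ring
      rw [hm] at h
      have hc := congrArg (coeff (Finsupp.single 0 i + Finsupp.single 1 0)) h
      rw [coeff_add, coeff_mon, if_pos ⟨rfl, rfl⟩, coeff_xy_mul, add_zero] at hc
      have hx := nrep_coeff hrep (i + 1) 1 i 0
      have e : ((i : ℤ) - ((i + 1 : ℕ) : ℤ)) = -1 := by push_cast; ring
      have e' : (((0 : ℕ) : ℤ) - ((1 : ℕ) : ℤ)) = -1 := by norm_num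
      rw [e, e'] at hx
      rw [hx] at hc
      push_cast at hc
      exact hc.symm
    set P : Polynomial ℂ :=
      MvPolynomial.aeval (fun k : Fin 2 => if k = 0 then Polynomial.X else 1) (g (-1) (-1))
      with hPdef
    have hPe : ∀ s : ℂ, P.eval s = ev (g (-1) (-1)) s 1 := by
      intro s
      rw [hPdef, eval_aeval_poly]
      have hfun : (fun k : Fin 2 => Polynomial.eval s (if k = 0 then Polynomial.X else 1))
          = fun k => if k = 0 then s else (1 : ℂ) := by
        funext k
        by_cases hk : k = 0 <;> simp [hk]
      rw [hfun]
      rfl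
    have hsub : P - Polynomial.C 1 = 0 := by
      apply Polynomial.eq_zero_of_infinite_isRoot
      apply Set.infinite_of_injective_forall_mem (f := fun i : ℕ => ((i : ℂ) + 1))
      · intro m n hmn
        simpa using hmn
      · intro i
        show Polynomial.IsRoot _ _
        rw [Polynomial.IsRoot, Polynomial.eval_sub, hPe, Polynomial.eval_C, hone i, sub_self]
    have h1 : P.eval 0 = 1 := by
      have hp1 : P = Polynomial.C 1 := by rwa [sub_eq_zero] at hsub
      rw [hp1, Polynomial.eval_C]
    have h0 : P.eval 0 = 0 := by
      rw [hPe]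
      have hz := hrep.2.1 (-1) (-1) 0 1 (Or.inl (by norm_num))
      simpa using hz
    rw [h0] at h1
    exact zero_ne_one h1
  constructor
  · intro hall
    exact key (hall 1 (one_mem _))
  · exact key
end
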